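/- arXiv:1304.1575 — 7 statements merged into one kernel-verified Lean document; each statement's English description precedes it below -/
import Mathlib

section
/- Let X ⊆ ℝ^m be nonempty, closed, and convex, and let f : ℝ^m → ℝ be continuous on X. The strict part ≺_f of the linear scalar polyorder is acyclic: there is no finite set {x₁, …, x_n} ⊆ X with x_i ≺_f x_{i+1} for i = 1, …, n−1 and x_n ≺_f x₁. -/
open Set

noncomputable section

/-- The path point `y_ε = ε x + (1 - ε) y`. -/
def pathPt {m : ℕ} (x y : EuclideanSpace ℝ (Fin m)) (ε : ℝ) :
    EuclideanSpace ℝ (Fin m) :=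
  ε • x + (1 - ε) • y

/-- The linear scalar polyorder `x ⪯_f y`. -/
def scalarLe {m : ℕ} (f : EuclideanSpace ℝ (Fin m) → ℝ)
    (x y : EuclideanSpace ℝ (Fin m)) : Prop :=
  ∀ ε₁ ∈ Icc (0:ℝ) 1, ∀ ε₂ ∈ Icc (0:ℝ) 1, ε₁ < ε₂ →
    f (pathPt x y ε₁) ≥ f (pathPt x y ε₂)

/-- The strict part `x ≺_f y` of the linear scalar polyorder. -/
def scalarLt {m : ℕ} (f : EuclideanSpace ℝ (Fin m) → ℝ)
    (x y : EuclideanSpace ℝ (Fin m)) : Prop :=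
  scalarLe f x y ∧ ¬ scalarLe f y x

lemma pathPt_rev {m : ℕ} (x y : EuclideanSpace ℝ (Fin m)) (ε : ℝ) :
    pathPt y x ε = pathPt x y (1 - ε) := by
  simp [pathPt]; module

lemma pathPt_zero {m : ℕ} (x y : EuclideanSpace ℝ (Fin m)) :
    pathPt x y 0 = y := by simp [pathPt]

lemma pathPt_one {m : ℕ} (x y : EuclideanSpace ℝ (Fin m)) :
    pathPt x y 1 = x := by simp [pathPt]

lemma scalarLt_f_lt {m : ℕ} {f : EuclideanSpace ℝ (Fin m) → ℝ}
    {x y : EuclideanSpace ℝ (Fin m)} (h : scalarLt f x y) : f x < f y := by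
  obtain ⟨hle, hnle⟩ := h
  unfold scalarLe at hnle
  push_neg at hnle
  obtain ⟨ε₁, hε₁, ε₂, hε₂, h12, hlt⟩ := hnle
  rw [pathPt_rev x y ε₁, pathPt_rev x y ε₂] at hlt
  have hδ₁m : (1 - ε₂) ∈ Icc (0:ℝ) 1 := ⟨by linarith [hε₂.2], by linarith [hε₂.1]⟩
  have hδ₂m : (1 - ε₁) ∈ Icc (0:ℝ) 1 := ⟨by linarith [hε₁.2], by linarith [hε₁.1]⟩
  have hy : f (pathPt x y (1 - ε₂)) ≤ f y := by
    rcases eq_or_lt_of_le hδ₁m.1 with h0 | h0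
    · rw [← h0, pathPt_zero]
    · have := hle 0 ⟨le_refl 0, zero_le_one⟩ _ hδ₁m h0
      rw [pathPt_zero] at this; exact this
  have hx : f x ≤ f (pathPt x y (1 - ε₁)) := by
    rcases eq_or_lt_of_le hδ₂m.2 with h1 | h1
    · rw [h1, pathPt_one]
    · have := hle _ hδ₂m 1 ⟨zero_le_one, le_refl 1⟩ h1
      rw [pathPt_one] at this; exact this
  linarith

/-- The strict part of a linear scalar polyorder is acyclic: there is no finite
cycle `x₀ ≺_f x₁ ≺_f ⋯ ≺_f x_n ≺_f x₀` of elements of `X`. -/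
theorem strict_scalar_polyorder_acyclic {m : ℕ} (X : Set (EuclideanSpace ℝ (Fin m)))
    (hXne : X.Nonempty) (hXcl : IsClosed X) (hXconv : Convex ℝ X)
    (f : EuclideanSpace ℝ (Fin m) → ℝ) (hf : ContinuousOn f X) :
    ¬ ∃ (n : ℕ) (z : Fin (n + 1) → EuclideanSpace ℝ (Fin m)),
      (∀ i, z i ∈ X) ∧
      (∀ i : Fin n, scalarLt f (z i.castSucc) (z i.succ)) ∧
      scalarLt f (z (Fin.last n)) (z 0) := by
  rintro ⟨n, z, _, hstep, hlast⟩
  have key : ∀ i : Fin (n + 1), f (z 0) ≤ f (z i) := by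
    intro i
    induction i using Fin.induction with
    | zero => exact le_refl _
    | succ i ih => exact le_of_lt (lt_of_le_of_lt ih (scalarLt_f_lt (hstep i)))
  have := scalarLt_f_lt hlast
  have := key (Fin.last n)
  linarith
end
end

section
/- Let f : ℝ^m → ℝ be continuously differentiable with gradient field c̃ = ∇f : ℝ^m → ℝ^m, and let X ⊆ ℝ^m be nonempty, closed, and convex. Then for all x, y ∈ X: x ⪯_c y if and only if x ⪯_f y, where c denotes the restriction of c̃ to X. -/
open Set

noncomputable section

/-- The linear vector polyorder `x ⪯_c y`: for all `ε ∈ [0,1]`,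
`⟨x, c(y_ε)⟩ ≤ ⟨y, c(y_ε)⟩`. -/
def vecLe {m : ℕ} (c : EuclideanSpace ℝ (Fin m) → EuclideanSpace ℝ (Fin m))
    (x y : EuclideanSpace ℝ (Fin m)) : Prop :=
  ∀ ε ∈ Icc (0:ℝ) 1,
    (inner ℝ x (c (pathPt x y ε)) : ℝ) ≤ inner ℝ y (c (pathPt x y ε))

/-- The strict part `x ≺_c y` of the linear vector polyorder. -/
def vecLt {m : ℕ} (c : EuclideanSpace ℝ (Fin m) → EuclideanSpace ℝ (Fin m))
    (x y : EuclideanSpace ℝ (Fin m)) : Prop :=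
  vecLe c x y ∧ ¬ vecLe c y x

/- Along the segment, `ε ↦ f (y_ε)` has derivative `⟪∇f (y_ε), x - y⟫`, and `x ⪯_c y` says exactly
that this derivative is `≤ 0` on `[0, 1]`, while `x ⪯_f y` says that `ε ↦ f (y_ε)` is antitone on
`[0, 1]`. For a function differentiable on a nondegenerate closed interval, being antitone is
equivalent to having nonpositive derivative there: one direction is the mean value theorem, the
other holds because every point of `[a, b]` is an accumulation point of `[a, b]`. -/

theorem antitoneOn_Icc_iff_forall_nonpos_of_hasDerivAt {g g' : ℝ → ℝ} {a b : ℝ} (hab : a < b)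
    (hg : ∀ t ∈ Icc a b, HasDerivAt g (g' t) t) :
    AntitoneOn g (Icc a b) ↔ ∀ t ∈ Icc a b, g' t ≤ 0 := by
  constructor
  · intro hanti t ht
    exact (hg t ht).hasDerivWithinAt.nonpos_of_antitoneOn (uniqueDiffOn_Icc hab t ht).accPt hanti
  · intro hnonpos
    refine antitoneOn_of_hasDerivWithinAt_nonpos (convex_Icc a b)
      (fun t ht ↦ (hg t ht).continuousAt.continuousWithinAt)
      (fun t ht ↦ (hg t (interior_subset ht)).hasDerivWithinAt)
      (fun t ht ↦ hnonpos t (interior_subset ht))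

section Path

variable {m : ℕ} {x y : EuclideanSpace ℝ (Fin m)}

theorem hasDerivAt_pathPt (ε : ℝ) : HasDerivAt (pathPt x y) (x - y) ε := by
  have hpath : pathPt x y = fun t : ℝ ↦ y + t • (x - y) := by
    funext t
    simp only [pathPt, smul_sub, sub_smul, one_smul]
    abel
  rw [hpath]
  simpa using ((hasDerivAt_id ε).smul_const (x - y)).const_add y

theorem HasGradientAt.hasDerivAt_comp_pathPt {f : EuclideanSpace ℝ (Fin m) → ℝ}
    {f' : EuclideanSpace ℝ (Fin m)} {ε : ℝ} (hf : HasGradientAt f f' (pathPt x y ε)) :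
    HasDerivAt (fun t ↦ f (pathPt x y t)) (inner ℝ f' (x - y)) ε := by
  have hcomp : HasDerivAt (fun t ↦ f (pathPt x y t)) _ ε :=
    hf.hasFDerivAt.comp_hasDerivAt ε (hasDerivAt_pathPt ε)
  simpa using hcomp

theorem vecLe_iff_forall_inner_sub_nonpos
    (c : EuclideanSpace ℝ (Fin m) → EuclideanSpace ℝ (Fin m)) :
    vecLe c x y ↔ ∀ ε ∈ Icc (0 : ℝ) 1, inner ℝ (c (pathPt x y ε)) (x - y) ≤ 0 := by
  simp only [vecLe, inner_sub_right, sub_nonpos, real_inner_comm x, real_inner_comm y]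

theorem scalarLe_iff_antitoneOn (f : EuclideanSpace ℝ (Fin m) → ℝ) :
    scalarLe f x y ↔ AntitoneOn (fun ε ↦ f (pathPt x y ε)) (Icc 0 1) := by
  refine ⟨fun h ε₁ hε₁ ε₂ hε₂ hle ↦ ?_, fun h ε₁ hε₁ ε₂ hε₂ hlt ↦ h hε₁ hε₂ hlt.le⟩
  rcases hle.eq_or_lt with rfl | hlt
  · exact le_rfl
  · exact h ε₁ hε₁ ε₂ hε₂ hlt

end Path

theorem vecLe_iff_scalarLe_of_gradient_general {m : ℕ}
    (f : EuclideanSpace ℝ (Fin m) → ℝ) (hf : ContDiff ℝ 1 f)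
    (X : Set (EuclideanSpace ℝ (Fin m))) :
    ∀ x ∈ X, ∀ y ∈ X, (vecLe (gradient f) x y ↔ scalarLe f x y) := by
  intro x _ y _
  have hderiv : ∀ ε ∈ Icc (0 : ℝ) 1, HasDerivAt (fun t ↦ f (pathPt x y t))
      (inner ℝ (gradient f (pathPt x y ε)) (x - y)) ε := fun ε _ ↦
    (hf.differentiable one_ne_zero _).hasGradientAt.hasDerivAt_comp_pathPt
  rw [vecLe_iff_forall_inner_sub_nonpos, scalarLe_iff_antitoneOn,
    antitoneOn_Icc_iff_forall_nonpos_of_hasDerivAt zero_lt_one hderiv]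

/-- For a continuously differentiable `f` with gradient field `∇f`, weak
dominance for the gradient field coincides with weak descent for `f`. -/
theorem vecLe_iff_scalarLe_of_gradient {m : ℕ}
    (f : EuclideanSpace ℝ (Fin m) → ℝ) (hf : ContDiff ℝ 1 f)
    (X : Set (EuclideanSpace ℝ (Fin m)))
    (hXne : X.Nonempty) (hXcl : IsClosed X) (hXconv : Convex ℝ X) :
    ∀ x ∈ X, ∀ y ∈ X, (vecLe (gradient f) x y ↔ scalarLe f x y) :=
  vecLe_iff_scalarLe_of_gradient_general f hf X
end
end

section
/- Let X ⊆ ℝ^m be nonempty, closed, and convex, and let c : ℝ^m → ℝ^m be continuous on X. If x* is an evolutionarily stable state of (X, c), then x* is ⪯_c-minimal. -/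
open Set

noncomputable section

/-- `x*` is `⪯_c`-minimal in `X`: no element of `X` strictly dominates it. -/
def vecMinimal {m : ℕ} (X : Set (EuclideanSpace ℝ (Fin m)))
    (c : EuclideanSpace ℝ (Fin m) → EuclideanSpace ℝ (Fin m))
    (xs : EuclideanSpace ℝ (Fin m)) : Prop :=
  ∀ x ∈ X, ¬ vecLt c x xs

/-- `x*` is an evolutionarily stable state of `(X, c)`: on some neighborhood
of `x*` relative to `X`, every `x ≠ x*` satisfies `⟨x*, c(x)⟩ < ⟨x, c(x)⟩`. -/
def IsESS {m : ℕ} (X : Set (EuclideanSpace ℝ (Fin m)))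
    (c : EuclideanSpace ℝ (Fin m) → EuclideanSpace ℝ (Fin m))
    (xs : EuclideanSpace ℝ (Fin m)) : Prop :=
  ∃ O : Set (EuclideanSpace ℝ (Fin m)), O ⊆ X ∧ O ∈ nhdsWithin xs X ∧
    ∀ x ∈ O, x ≠ xs → (inner ℝ xs (c x) : ℝ) < inner ℝ x (c x)

/-
Suppose `x ⪯_c x*` with `x ≠ x*`. The points `y_ε` of the segment from `x*` towards `x` lie in
`X` by convexity and, for small `ε > 0`, in the neighbourhood where `x*` is stable. There
`⟨y_ε, c(y_ε)⟩ = ε ⟨x, c(y_ε)⟩ + (1 - ε) ⟨x*, c(y_ε)⟩ ≤ ⟨x*, c(y_ε)⟩` by `x ⪯_c x*`, which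
contradicts stability. The case `x = x*` is excluded because `≺_c` is irreflexive.
-/

open Filter Topology

section

variable {m : ℕ}

theorem pathPt_eq_lineMap (x y : EuclideanSpace ℝ (Fin m)) (ε : ℝ) :
    pathPt x y ε = AffineMap.lineMap y x ε := by
  rw [AffineMap.lineMap_apply_module, pathPt, add_comm]

theorem pathPt_ne_right {x y : EuclideanSpace ℝ (Fin m)} (hxy : x ≠ y) {ε : ℝ} (hε : ε ≠ 0) :
    pathPt x y ε ≠ y := by
  simp [pathPt_eq_lineMap, hxy.symm, hε]

theorem inner_pathPt_le_right {x y v : EuclideanSpace ℝ (Fin m)} {ε : ℝ} (hε : 0 ≤ ε)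
    (h : inner ℝ x v ≤ inner ℝ y v) : inner ℝ (pathPt x y ε) v ≤ inner ℝ y v := by
  rw [pathPt, inner_add_left, real_inner_smul_left, real_inner_smul_left]
  nlinarith

theorem tendsto_pathPt_nhdsWithin {X : Set (EuclideanSpace ℝ (Fin m))} (hX : Convex ℝ X)
    {x y : EuclideanSpace ℝ (Fin m)} (hx : x ∈ X) (hy : y ∈ X) :
    Tendsto (pathPt x y) (𝓝[Icc 0 1] 0) (𝓝[X] y) := by
  have hcont : Tendsto (pathPt x y) (𝓝 0) (𝓝 y) := by
    rw [funext (pathPt_eq_lineMap x y)]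
    simpa using (AffineMap.lineMap_continuous (p := y) (q := x)).tendsto (0 : ℝ)
  refine tendsto_nhdsWithin_of_tendsto_nhds_of_eventually_within _
    (hcont.mono_left nhdsWithin_le_nhds) ?_
  filter_upwards [self_mem_nhdsWithin] with ε hε
  simpa [pathPt_eq_lineMap] using hX.lineMap_mem hy hx hε

theorem not_vecLe_of_isESS {X : Set (EuclideanSpace ℝ (Fin m))} (hX : Convex ℝ X)
    {c : EuclideanSpace ℝ (Fin m) → EuclideanSpace ℝ (Fin m)} {xs : EuclideanSpace ℝ (Fin m)}
    (hxs : xs ∈ X) (hess : IsESS X c xs) {x : EuclideanSpace ℝ (Fin m)} (hx : x ∈ X)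
    (hne : x ≠ xs) : ¬ vecLe c x xs := by
  intro hle
  obtain ⟨O, -, hO, hstable⟩ := hess
  have hnear : ∀ᶠ ε in 𝓝[Ioo 0 1] 0, pathPt x xs ε ∈ O :=
    (tendsto_pathPt_nhdsWithin hX hx hxs).mono_left (nhdsWithin_mono _ Ioo_subset_Icc_self) hO
  rw [nhdsWithin_Ioo_eq_nhdsGT one_pos] at hnear
  obtain ⟨ε, hεO, hε0, hε1⟩ :=
    (hnear.and (Ioo_mem_nhdsGT (one_pos : (0 : ℝ) < 1))).exists
  have hlt := hstable _ hεO (pathPt_ne_right hne hε0.ne')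
  exact hlt.not_ge (inner_pathPt_le_right hε0.le (hle ε ⟨hε0.le, hε1.le⟩))

end

theorem isESS_vecMinimal_general {m : ℕ} (X : Set (EuclideanSpace ℝ (Fin m)))
    (hXconv : Convex ℝ X)
    (c : EuclideanSpace ℝ (Fin m) → EuclideanSpace ℝ (Fin m))
    (xs : EuclideanSpace ℝ (Fin m)) (hxs : xs ∈ X)
    (hess : IsESS X c xs) : vecMinimal X c xs := by
  rintro x hx ⟨hle, hnotge⟩
  obtain rfl | hne := eq_or_ne x xs
  · exact hnotge hle
  · exact not_vecLe_of_isESS hXconv hxs hess hx hne hle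

/-- An evolutionarily stable state is `⪯_c`-minimal. -/
theorem isESS_vecMinimal {m : ℕ} (X : Set (EuclideanSpace ℝ (Fin m)))
    (hXne : X.Nonempty) (hXcl : IsClosed X) (hXconv : Convex ℝ X)
    (c : EuclideanSpace ℝ (Fin m) → EuclideanSpace ℝ (Fin m)) (hc : ContinuousOn c X)
    (xs : EuclideanSpace ℝ (Fin m)) (hxs : xs ∈ X)
    (hess : IsESS X c xs) : vecMinimal X c xs :=
  isESS_vecMinimal_general X hXconv c xs hxs hess
end
end

section
/- Let X ⊆ ℝ^m be nonempty, closed, and convex, and let f : ℝ^m → ℝ be continuous on X. If x* is a strict local minimum of (X, f), then x* is ⪯_f-minimal. -/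
open Set

noncomputable section

/-- `x*` is `⪯_f`-minimal in `X`: no element of `X` strictly dominates it. -/
def scalarMinimal {m : ℕ} (X : Set (EuclideanSpace ℝ (Fin m)))
    (f : EuclideanSpace ℝ (Fin m) → ℝ)
    (xs : EuclideanSpace ℝ (Fin m)) : Prop :=
  ∀ x ∈ X, ¬ scalarLt f x xs

/-- `x*` is a strict local minimum of `(X, f)`: on some neighborhood of `x*`
relative to `X`, every `x ≠ x*` satisfies `f(x*) < f(x)`. -/
def IsStrictLocalMin {m : ℕ} (X : Set (EuclideanSpace ℝ (Fin m)))
    (f : EuclideanSpace ℝ (Fin m) → ℝ)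
    (xs : EuclideanSpace ℝ (Fin m)) : Prop :=
  ∃ O : Set (EuclideanSpace ℝ (Fin m)), O ⊆ X ∧ O ∈ nhdsWithin xs X ∧
    ∀ x ∈ O, x ≠ xs → f xs < f x

/-- A strict local minimum of `(X, f)` is `⪯_f`-minimal. -/
theorem isStrictLocalMin_scalarMinimal {m : ℕ} (X : Set (EuclideanSpace ℝ (Fin m)))
    (hXne : X.Nonempty) (hXcl : IsClosed X) (hXconv : Convex ℝ X)
    (f : EuclideanSpace ℝ (Fin m) → ℝ) (hf : ContinuousOn f X)
    (xs : EuclideanSpace ℝ (Fin m)) (hxs : xs ∈ X)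
    (hslm : IsStrictLocalMin X f xs) : scalarMinimal X f xs := by
  rintro x hx ⟨hle, hnle⟩
  by_cases hxx : x = xs
  · subst hxx; exact hnle hle
  obtain ⟨O, hOX, hOnhds, hmin⟩ := hslm
  obtain ⟨U, hUopen, hxsU, hUX⟩ := mem_nhdsWithin.mp hOnhds
  have hcont : Continuous (fun ε : ℝ => pathPt x xs ε) := by
    unfold pathPt; continuity
  have h0 : pathPt x xs 0 = xs := by simp [pathPt]
  have hev : ∀ᶠ ε in nhds (0:ℝ), pathPt x xs ε ∈ U := by
    have hc := hcont.continuousAt (x := (0:ℝ))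
    rw [ContinuousAt, h0] at hc
    exact hc (hUopen.mem_nhds hxsU)
  obtain ⟨δ, hδ, hball⟩ := Metric.eventually_nhds_iff.mp hev
  set ε : ℝ := min (δ/2) 1 with hεdef
  have hε0 : 0 < ε := lt_min (by linarith) one_pos
  have hε1 : ε ≤ 1 := min_le_right _ _
  have hεδ : dist ε 0 < δ := by
    rw [Real.dist_eq, sub_zero, abs_of_pos hε0]
    exact lt_of_le_of_lt (min_le_left _ _) (by linarith)
  set y := pathPt x xs ε with hy
  have hyU : y ∈ U := hball hεδ
  have hyX : y ∈ X := hXconv hx hxs hε0.le (by linarith) (by ring)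
  have hyO : y ∈ O := hUX ⟨hyU, hyX⟩
  have hyne : y ≠ xs := by
    intro h
    apply hxx
    have : ε • x = ε • xs := by
      have := h
      simp only [hy, pathPt] at this
      have h2 : ε • x + (1 - ε) • xs = ε • xs + (1 - ε) • xs := by
        rw [this]; module
      exact add_right_cancel h2
    have := smul_right_injective (EuclideanSpace ℝ (Fin m)) hε0.ne' this
    exact this
  have hlt : f xs < f y := hmin y hyO hyne
  have hge : f (pathPt x xs 0) ≥ f (pathPt x xs ε) :=
    hle 0 ⟨le_refl _, zero_le_one⟩ ε ⟨hε0.le, hε1⟩ hε0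
  rw [h0] at hge
  exact absurd hge (not_le.mpr hlt)
end
end

section
/- Let X ⊆ ℝ^m be nonempty, closed, and convex, and let f : ℝ^m → ℝ be continuous on X. Let X* ⊆ X be an almost strictly minimal set of (X, f), and let x* ∈ X*. Then x* is ⪯_f-minimal. -/
open Set

noncomputable section

/-- `Xs` is an almost strictly minimal set of `(X, f)`. -/
def IsAlmostStrictlyMinimalSet {m : ℕ} (X : Set (EuclideanSpace ℝ (Fin m)))
    (f : EuclideanSpace ℝ (Fin m) → ℝ)
    (Xs : Set (EuclideanSpace ℝ (Fin m))) : Prop :=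
  Xs ⊆ X ∧ Xs.Nonempty ∧ IsClosed Xs ∧
    ∀ xs ∈ Xs, ∃ O : Set (EuclideanSpace ℝ (Fin m)), O ⊆ X ∧ O ∈ nhdsWithin xs X ∧
      ∀ x ∈ O, f xs ≤ f x ∧ (x ∉ Xs → f xs < f x)

/-- Every member of an almost strictly minimal set is `⪯_f`-minimal. -/
theorem mem_almostStrictlyMinimalSet_scalarMinimal {m : ℕ}
    (X : Set (EuclideanSpace ℝ (Fin m)))
    (hXne : X.Nonempty) (hXcl : IsClosed X) (hXconv : Convex ℝ X)
    (f : EuclideanSpace ℝ (Fin m) → ℝ) (hf : ContinuousOn f X)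
    (Xs : Set (EuclideanSpace ℝ (Fin m))) (hXs : IsAlmostStrictlyMinimalSet X f Xs)
    (xs : EuclideanSpace ℝ (Fin m)) (hxs : xs ∈ Xs) :
    scalarMinimal X f xs := by
  obtain ⟨hXsX, hXsne, hXscl, hmin⟩ := hXs
  rintro x hx ⟨hle, hnle⟩
  set y : ℝ → EuclideanSpace ℝ (Fin m) := fun ε => pathPt x xs ε with hy
  have hxsX : xs ∈ X := hXsX hxs
  have hyX : ∀ ε ∈ Icc (0:ℝ) 1, y ε ∈ X := by
    intro ε hε
    exact hXconv hx hxsX hε.1 (by linarith [hε.2]) (by ring)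
  have hy0 : y 0 = xs := by simp [hy, pathPt]
  have hy1 : y 1 = x := by simp [hy, pathPt]
  have hycont : Continuous y := by
    simp only [hy, pathPt]
    fun_prop
  set T : Set ℝ := (Icc (0:ℝ) 1 ∩ (fun ε => f (y ε)) ⁻¹' {f xs}) ∩ y ⁻¹' Xs with hT
  have hmemT : ∀ ε, ε ∈ T ↔ (ε ∈ Icc (0:ℝ) 1 ∧ f (y ε) = f xs) ∧ y ε ∈ Xs := by
    intro ε
    simp [hT, Set.mem_inter_iff, Set.mem_preimage]
  have h0T : (0:ℝ) ∈ T := by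
    rw [hmemT]
    refine ⟨⟨⟨le_refl 0, zero_le_one⟩, by rw [hy0]⟩, by rw [hy0]; exact hxs⟩
  have hgcont : ContinuousOn (fun ε => f (y ε)) (Icc (0:ℝ) 1) :=
    hf.comp hycont.continuousOn hyX
  have hTclosed : IsClosed T :=
    (hgcont.preimage_isClosed_of_isClosed isClosed_Icc isClosed_singleton).inter
      (hXscl.preimage hycont)
  have hTbdd : BddAbove T := ⟨1, fun ε hε => ((hmemT ε).mp hε).1.1.2⟩
  set t := sSup T with htdef
  have htT : t ∈ T := hTclosed.csSup_mem ⟨0, h0T⟩ hTbdd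
  rw [hmemT] at htT
  obtain ⟨⟨htIcc, htf⟩, htXs⟩ := htT
  have ht1 : t = 1 := by
    by_contra h
    have htlt : t < 1 := lt_of_le_of_ne htIcc.2 h
    obtain ⟨O, hOX, hOnhds, hOmin⟩ := hmin (y t) htXs
    have hmaps : MapsTo y (Ioc t 1) X := fun ε hε =>
      hyX ε ⟨le_trans htIcc.1 (le_of_lt hε.1), hε.2⟩
    have htend : Filter.Tendsto y (nhdsWithin t (Ioc t 1)) (nhdsWithin (y t) X) :=
      hycont.continuousWithinAt.tendsto_nhdsWithin hmaps
    have hne : (nhdsWithin t (Ioc t 1)).NeBot := by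
      rw [mem_closure_iff_nhdsWithin_neBot.symm, closure_Ioc (ne_of_lt htlt)]
      exact ⟨le_refl t, le_of_lt htlt⟩
    have hev : ∀ᶠ ε in nhdsWithin t (Ioc t 1), ε ∈ Ioc t 1 ∧ y ε ∈ O :=
      (eventually_mem_nhdsWithin).and (htend hOnhds)
    obtain ⟨ε, hεIoc, hεO⟩ := hev.exists
    have hεIcc : ε ∈ Icc (0:ℝ) 1 := ⟨le_trans htIcc.1 (le_of_lt hεIoc.1), hεIoc.2⟩
    have hfle : f (y ε) ≤ f (y t) := hle t htIcc ε hεIcc hεIoc.1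
    have hfge : f (y t) ≤ f (y ε) := (hOmin (y ε) hεO).1
    have hfeq : f (y ε) = f (y t) := le_antisymm hfle hfge
    have hεXs : y ε ∈ Xs := by
      by_contra h'
      exact absurd hfle (not_le.mpr ((hOmin (y ε) hεO).2 h'))
    have hεT : ε ∈ T := (hmemT ε).mpr ⟨⟨hεIcc, hfeq.trans htf⟩, hεXs⟩
    exact absurd (le_csSup hTbdd hεT) (not_le.mpr hεIoc.1)
  have hfx : f x = f xs := by rw [← hy1, ← ht1]; exact htf
  have hconst : ∀ s ∈ Icc (0:ℝ) 1, f (y s) = f xs := by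
    intro s hs
    rcases eq_or_lt_of_le hs.1 with h0 | h0
    · rw [← h0, hy0]
    rcases eq_or_lt_of_le hs.2 with h1 | h1
    · rw [h1, hy1, hfx]
    have hupper : f (y s) ≤ f (y 0) := hle 0 ⟨le_refl 0, zero_le_one⟩ s hs h0
    have hlower : f (y 1) ≤ f (y s) := hle s hs 1 ⟨zero_le_one, le_refl 1⟩ h1
    rw [hy0] at hupper
    rw [hy1, hfx] at hlower
    exact le_antisymm hupper hlower
  apply hnle
  intro ε₁ hε₁ ε₂ hε₂ hlt
  have hpath : ∀ ε : ℝ, pathPt xs x ε = y (1 - ε) := by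
    intro ε
    simp only [hy, pathPt]
    module
  rw [hpath ε₁, hpath ε₂,
    hconst (1 - ε₁) ⟨by linarith [hε₁.2], by linarith [hε₁.1]⟩,
    hconst (1 - ε₂) ⟨by linarith [hε₂.2], by linarith [hε₂.1]⟩]
end
end

section
/- Let f : ℝ → ℝ be continuous, let x* be an isolated zero of f (i.e., f(x*) = 0 and there is a neighborhood of x* containing no other zero of f), and suppose f is differentiable in a neighborhood of x*. Viewing f as a one-dimensional vector field, if f'(x*) > 0 then x* is ⪯_f-minimal, and if f'(x*) < 0 then x* is ⪯_f-maximal, where ⪯_f is the linear vector polyorder of the vector field f on ℝ. -/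
open Set

noncomputable section

/-- The linear vector polyorder on `ℝ` for the one-dimensional vector field `f`:
`x ⪯_f y` iff for all `ε ∈ [0,1]`, `x·f(εx + (1-ε)y) ≤ y·f(εx + (1-ε)y)`. -/
def vecLe1 (f : ℝ → ℝ) (x y : ℝ) : Prop :=
  ∀ ε ∈ Icc (0:ℝ) 1, x * f (ε * x + (1 - ε) * y) ≤ y * f (ε * x + (1 - ε) * y)

/-- The strict part `x ≺_f y` of the linear vector polyorder on `ℝ`. -/
def vecLt1 (f : ℝ → ℝ) (x y : ℝ) : Prop :=
  vecLe1 f x y ∧ ¬ vecLe1 f y x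

/-- `x*` is `⪯_f`-minimal: no real strictly dominates it. -/
def vecMinimal1 (f : ℝ → ℝ) (xs : ℝ) : Prop :=
  ∀ x : ℝ, ¬ vecLt1 f x xs

/-- `x*` is `⪯_f`-maximal: it strictly dominates no real. -/
def vecMaximal1 (f : ℝ → ℝ) (xs : ℝ) : Prop :=
  ∀ x : ℝ, ¬ vecLt1 f xs x

/-- At an isolated zero of a one-dimensional vector field `f` that is
differentiable nearby, a positive derivative gives `⪯_f`-minimality and a
negative derivative gives `⪯_f`-maximality. -/
theorem isolated_zero_min_max (f : ℝ → ℝ) (hf : Continuous f) (xs : ℝ)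
    (hzero : f xs = 0)
    (hiso : ∃ U ∈ nhds xs, ∀ z ∈ U, f z = 0 → z = xs)
    (hdiff : ∃ V ∈ nhds xs, ∀ z ∈ V, DifferentiableAt ℝ f z) :
    (0 < deriv f xs → vecMinimal1 f xs) ∧ (deriv f xs < 0 → vecMaximal1 f xs) := by
  obtain ⟨V, hV, hVdiff⟩ := hdiff
  have hdx : DifferentiableAt ℝ f xs := hVdiff xs (mem_of_mem_nhds hV)
  have hslope : Filter.Tendsto (slope f xs) (nhdsWithin xs {xs}ᶜ) (nhds (deriv f xs)) :=
    hasDerivAt_iff_tendsto_slope.mp hdx.hasDerivAt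
  constructor
  · intro hpos x ⟨hle, hnle⟩
    have hev : ∀ᶠ t in nhdsWithin xs {xs}ᶜ, 0 < slope f xs t :=
      hslope.eventually (eventually_gt_nhds hpos)
    rw [eventually_nhdsWithin_iff, Metric.eventually_nhds_iff] at hev
    obtain ⟨δ, hδ, hP⟩ := hev
    rcases eq_or_ne x xs with rfl | hx
    · exact hnle hle
    have hd : 0 < |x - xs| := abs_pos.mpr (sub_ne_zero.mpr hx)
    set ε : ℝ := min (δ / (2 * |x - xs|)) 1 with hε
    have hε0 : 0 < ε := lt_min (by positivity) one_pos
    have hε1 : ε ≤ 1 := min_le_right _ _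
    set t : ℝ := ε * x + (1 - ε) * xs with ht
    have hts : t - xs = ε * (x - xs) := by rw [ht]; ring
    have htne : t ≠ xs := by
      rw [← sub_ne_zero, hts]
      exact mul_ne_zero (ne_of_gt hε0) (sub_ne_zero.mpr hx)
    have hdist : dist t xs < δ := by
      rw [Real.dist_eq, hts, abs_mul, abs_of_pos hε0]
      calc ε * |x - xs| ≤ δ / (2 * |x - xs|) * |x - xs| := by
            apply mul_le_mul_of_nonneg_right (min_le_left _ _) (abs_nonneg _)
        _ = δ / 2 := by field_simp
        _ < δ := by linarith
    have hsl := hP hdist htne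
    have hsl' : 0 < (f t - f xs) / (t - xs) := by
      simpa [slope_def_field] using hsl
    rw [hzero, sub_zero] at hsl'
    have hle' := hle ε ⟨le_of_lt hε0, hε1⟩
    rw [← ht] at hle'
    rcases div_pos_iff.mp hsl' with ⟨h1, h2⟩ | ⟨h1, h2⟩
    · rw [hts] at h2
      nlinarith
    · rw [hts] at h2
      nlinarith
  · intro hneg x ⟨hle, hnle⟩
    have hev : ∀ᶠ t in nhdsWithin xs {xs}ᶜ, slope f xs t < 0 :=
      hslope.eventually (eventually_lt_nhds hneg)
    rw [eventually_nhdsWithin_iff, Metric.eventually_nhds_iff] at hev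
    obtain ⟨δ, hδ, hP⟩ := hev
    rcases eq_or_ne x xs with rfl | hx
    · exact hnle hle
    have hd : 0 < |x - xs| := abs_pos.mpr (sub_ne_zero.mpr hx)
    set η : ℝ := min (δ / (2 * |x - xs|)) 1 with hη
    have hη0 : 0 < η := lt_min (by positivity) one_pos
    have hη1 : η ≤ 1 := min_le_right _ _
    set t : ℝ := (1 - η) * xs + (1 - (1 - η)) * x with ht
    have hts : t - xs = η * (x - xs) := by rw [ht]; ring
    have htne : t ≠ xs := by
      rw [← sub_ne_zero, hts]
      exact mul_ne_zero (ne_of_gt hη0) (sub_ne_zero.mpr hx)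
    have hdist : dist t xs < δ := by
      rw [Real.dist_eq, hts, abs_mul, abs_of_pos hη0]
      calc η * |x - xs| ≤ δ / (2 * |x - xs|) * |x - xs| := by
            apply mul_le_mul_of_nonneg_right (min_le_left _ _) (abs_nonneg _)
        _ = δ / 2 := by field_simp
        _ < δ := by linarith
    have hsl := hP hdist htne
    have hsl' : (f t - f xs) / (t - xs) < 0 := by
      simpa [slope_def_field] using hsl
    rw [hzero, sub_zero] at hsl'
    have hle' := hle (1 - η) ⟨by linarith, by linarith⟩
    rw [← ht] at hle'
    rcases div_neg_iff.mp hsl' with ⟨h1, h2⟩ | ⟨h1, h2⟩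
    · rw [hts] at h2
      nlinarith
    · rw [hts] at h2
      nlinarith
end
end

section
/- Let f : ℝ → ℝ be defined by f(x) = x·sin(1/x) for x ≠ 0 and f(0) = 0, viewed as a one-dimensional vector field on ℝ. Then the set of ⪯_f-minimal elements is {1/(nπ) : n = 1, 3, 5, …} ∪ {0} ∪ {1/(nπ) : n = −2, −4, −6, …}, and the set of ⪯_f-maximal elements is {1/(nπ) : n = 2, 4, 6, …} ∪ {0} ∪ {1/(nπ) : n = −1, −3, −5, …}. -/
open Set

noncomputable section

namespace XsinAux

open Real

/-- the vector field -/
def g : ℝ → ℝ := fun t => t * Real.sin (1 / t)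

lemma g_even (t : ℝ) : g (-t) = g t := by
  unfold g
  rcases eq_or_ne t 0 with h | h
  · simp [h]
  · rw [one_div, inv_neg, Real.sin_neg, ← one_div]; ring

lemma sin_pos_int (n : ℤ) (u : ℝ) (h1 : 2*n*π < u) (h2 : u < (2*n+1)*π) : 0 < Real.sin u := by
  have : Real.sin u = Real.sin (u - n*(2*π)) := by
    rw [← Real.sin_add_int_mul_two_pi (u - n*(2*π)) n]; ring_nf
  rw [this]
  exact Real.sin_pos_of_pos_of_lt_pi (by linarith) (by linarith)

lemma sin_neg_int (n : ℤ) (u : ℝ) (h1 : (2*n+1)*π < u) (h2 : u < (2*n+2)*π) : Real.sin u < 0 := by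
  have : Real.sin u = -Real.sin (u - π) := by
    rw [← Real.sin_add_pi (u - π)]; ring_nf
  rw [this, neg_neg_iff_pos]
  exact sin_pos_int n (u - π) (by linarith) (by linarith)


lemma gA (k : ℕ) (t : ℝ) (h1 : 1/((2*(k:ℝ)+1)*π) < t) (h2 : 2*(k:ℝ)*π*t < 1) : 0 < g t := by
  have hπ := Real.pi_pos
  have hc : 0 < (2*(k:ℝ)+1)*π := by positivity
  have ht : 0 < t := lt_trans (by positivity) h1
  have hu1 : 1/t < (2*(k:ℝ)+1)*π := by
    rw [div_lt_iff₀ ht]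
    have := (div_lt_iff₀ hc).mp h1
    linarith
  have hu2 : 2*(k:ℝ)*π < 1/t := by
    rw [lt_div_iff₀ ht]; linarith
  have hs : 0 < Real.sin (1/t) := by
    have := sin_pos_int (k : ℤ) (1/t) (by push_cast; linarith) (by push_cast; linarith)
    exact this
  exact mul_pos ht hs

lemma gA' (k : ℕ) (t : ℝ) (h1 : 1/((2*(k:ℝ)+1)*π) < t) (h2 : 2*(k:ℝ)*π*t ≤ 1) : 0 ≤ g t := by
  rcases lt_or_eq_of_le h2 with h | h
  · exact le_of_lt (gA k t h1 h)
  · have hπ := Real.pi_pos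
    have ht : 0 < t := lt_trans (by positivity) h1
    have h1t : 1/t = 2*(k:ℝ)*π := by
      field_simp
      linarith [h]
    unfold g
    rw [h1t]
    have : Real.sin (2*(k:ℝ)*π) = 0 := by
      rw [show 2*(k:ℝ)*π = ((2*k : ℕ) : ℝ)*π by push_cast; ring]
      exact Real.sin_nat_mul_pi (2*k)
    rw [this, mul_zero]

lemma gB (k : ℕ) (t : ℝ) (h1 : 1/((2*(k:ℝ)+2)*π) < t) (h2 : t < 1/((2*(k:ℝ)+1)*π)) : g t < 0 := by
  have hπ := Real.pi_pos
  have hc : 0 < (2*(k:ℝ)+2)*π := by positivity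
  have hc1 : 0 < (2*(k:ℝ)+1)*π := by positivity
  have ht : 0 < t := lt_trans (by positivity) h1
  have hu1 : 1/t < (2*(k:ℝ)+2)*π := by
    rw [div_lt_iff₀ ht]
    have := (div_lt_iff₀ hc).mp h1
    linarith
  have hu2 : (2*(k:ℝ)+1)*π < 1/t := by
    rw [lt_div_iff₀ ht]
    have := (lt_div_iff₀ hc1).mp h2
    linarith
  have hs : Real.sin (1/t) < 0 := by
    have := sin_neg_int (k : ℤ) (1/t) (by push_cast; linarith) (by push_cast; linarith)
    exact this
  exact mul_neg_of_pos_of_neg ht hs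


lemma gB' (k : ℕ) (t : ℝ) (h1 : 1/((2*(k:ℝ)+2)*π) < t) (h2 : t ≤ 1/((2*(k:ℝ)+1)*π)) : g t ≤ 0 := by
  rcases lt_or_eq_of_le h2 with h | h
  · exact le_of_lt (gB k t h1 h)
  · have hπ := Real.pi_pos
    have hc1 : 0 < (2*(k:ℝ)+1)*π := by positivity
    have ht : 0 < t := lt_trans (by positivity) h1
    have h1t : 1/t = (2*(k:ℝ)+1)*π := by
      rw [h, one_div_one_div]
    unfold g
    rw [h1t]
    rw [show (2*(k:ℝ)+1)*π = ((2*k+1 : ℕ) : ℝ)*π by push_cast; ring]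
    rw [Real.sin_nat_mul_pi (2*k+1), mul_zero]

/-- segment reformulation of `vecLe1` -/
lemma vecLe1_iff (f : ℝ → ℝ) (x y : ℝ) :
    vecLe1 f x y ↔ ∀ t ∈ uIcc x y, 0 ≤ (y - x) * f t := by
  constructor
  · intro h t ht
    rcases eq_or_ne x y with rfl | hxy
    · rw [sub_self, zero_mul]
    · have hne : x - y ≠ 0 := sub_ne_zero.mpr hxy
      set ε : ℝ := (t - y) / (x - y) with hε
      have hεIcc : ε ∈ Icc (0:ℝ) 1 := by
        rw [Set.mem_uIcc] at ht
        constructor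
        · rcases ht with ⟨h1, h2⟩ | ⟨h1, h2⟩
          · rw [hε, show (t - y)/(x - y) = (y - t)/(y - x) by rw [← neg_div_neg_eq]; ring_nf]
            apply div_nonneg <;> linarith [lt_of_le_of_ne (h1.trans h2) hxy]
          · apply div_nonneg <;>
              linarith [lt_of_le_of_ne ((h1.trans h2)) (Ne.symm hxy)]
        · rcases ht with ⟨h1, h2⟩ | ⟨h1, h2⟩
          · have hlt : x < y := lt_of_le_of_ne (h1.trans h2) hxy
            rw [hε, show (t - y)/(x - y) = (y - t)/(y - x) by rw [← neg_div_neg_eq]; ring_nf]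
            rw [div_le_one (by linarith)]; linarith
          · have hlt : y < x := lt_of_le_of_ne (h1.trans h2) (Ne.symm hxy)
            rw [div_le_one (by linarith)]; linarith
      have hteq : ε * x + (1 - ε) * y = t := by
        rw [hε]
        field_simp
        ring
      have := h ε hεIcc
      rw [hteq] at this
      nlinarith
  · intro h ε hε
    set t : ℝ := ε * x + (1 - ε) * y with htdef
    have htm : t ∈ uIcc x y := by
      rw [Set.mem_uIcc]
      obtain ⟨h0, h1⟩ := hε
      rcases le_total x y with hxy | hxy
      · exact Or.inl ⟨by nlinarith, by nlinarith⟩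
      · exact Or.inr ⟨by nlinarith, by nlinarith⟩
    have := h t htm
    nlinarith

lemma vecLt1_of (f : ℝ → ℝ) (a b : ℝ)
    (h1 : ∀ t ∈ uIcc a b, 0 ≤ (b - a) * f t) (u : ℝ) (hu : u ∈ uIcc a b)
    (h2 : 0 < (b - a) * f u) : vecLt1 f a b := by
  refine ⟨(vecLe1_iff f a b).mpr h1, fun hc => ?_⟩
  have := (vecLe1_iff f b a).mp hc u (by rwa [Set.uIcc_comm])
  nlinarith


lemma mem_uIcc_of_le {a b t : ℝ} (h1 : a ≤ t) (h2 : t ≤ b) : t ∈ uIcc a b :=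
  Set.mem_uIcc.mpr (Or.inl ⟨h1, h2⟩)

/-- `x < xs`, `f ≥ 0` on `[x,xs]`, `f x > 0` gives `x ≺ xs` -/
lemma lt_left_pos (f : ℝ → ℝ) (x xs : ℝ) (hx : x < xs)
    (h1 : ∀ t, x ≤ t → t ≤ xs → 0 ≤ f t) (h2 : 0 < f x) : vecLt1 f x xs := by
  apply vecLt1_of f x xs ?_ x (mem_uIcc_of_le le_rfl hx.le)
  · nlinarith
  · intro t ht
    rw [Set.mem_uIcc] at ht
    rcases ht with ⟨ha, hb⟩ | ⟨ha, hb⟩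
    · exact mul_nonneg (by linarith) (h1 t ha hb)
    · exact mul_nonneg (by linarith) (h1 t (by linarith) (by linarith))

/-- `xs < x`, `f ≤ 0` on `[xs,x]`, `f x < 0` gives `x ≺ xs` -/
lemma lt_right_neg (f : ℝ → ℝ) (x xs : ℝ) (hx : xs < x)
    (h1 : ∀ t, xs ≤ t → t ≤ x → f t ≤ 0) (h2 : f x < 0) : vecLt1 f x xs := by
  apply vecLt1_of f x xs ?_ x (Set.mem_uIcc.mpr (Or.inr ⟨hx.le, le_rfl⟩))
  · nlinarith
  · intro t ht
    rw [Set.mem_uIcc] at ht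
    rcases ht with ⟨ha, hb⟩ | ⟨ha, hb⟩
    · nlinarith [h1 t (by linarith) (by linarith)]
    · nlinarith [h1 t ha hb]

/-- `xs < x`, `f ≥ 0` on `[xs,x]`, `f x > 0` gives `xs ≺ x` -/
lemma lt_right_pos (f : ℝ → ℝ) (xs x : ℝ) (hx : xs < x)
    (h1 : ∀ t, xs ≤ t → t ≤ x → 0 ≤ f t) (h2 : 0 < f x) : vecLt1 f xs x := by
  apply vecLt1_of f xs x ?_ x (Set.mem_uIcc.mpr (Or.inl ⟨hx.le, le_rfl⟩))
  · nlinarith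
  · intro t ht
    rw [Set.mem_uIcc] at ht
    rcases ht with ⟨ha, hb⟩ | ⟨ha, hb⟩
    · exact mul_nonneg (by linarith) (h1 t ha hb)
    · exact mul_nonneg (by linarith) (h1 t (by linarith) (by linarith))

/-- `x < xs`, `f ≤ 0` on `[x,xs]`, `f x < 0` gives `xs ≺ x` -/
lemma lt_left_neg (f : ℝ → ℝ) (xs x : ℝ) (hx : x < xs)
    (h1 : ∀ t, x ≤ t → t ≤ xs → f t ≤ 0) (h2 : f x < 0) : vecLt1 f xs x := by
  apply vecLt1_of f xs x ?_ x (Set.mem_uIcc.mpr (Or.inr ⟨le_rfl, hx.le⟩))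
  · nlinarith
  · intro t ht
    rw [Set.mem_uIcc] at ht
    rcases ht with ⟨ha, hb⟩ | ⟨ha, hb⟩
    · nlinarith [h1 t (by linarith) (by linarith)]
    · nlinarith [h1 t ha hb]

lemma minimal_of (f : ℝ → ℝ) (xs : ℝ)
    (hL : ∀ x, x < xs → ∃ t, x < t ∧ t < xs ∧ f t < 0)
    (hR : ∀ x, xs < x → ∃ t, xs < t ∧ t < x ∧ 0 < f t) : vecMinimal1 f xs := by
  rintro x ⟨h1, h2⟩
  rcases lt_trichotomy x xs with h | h | h
  · obtain ⟨t, ht1, ht2, ht3⟩ := hL x h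
    have := (vecLe1_iff f x xs).mp h1 t (mem_uIcc_of_le ht1.le ht2.le)
    nlinarith
  · exact h2 (h ▸ h1)
  · obtain ⟨t, ht1, ht2, ht3⟩ := hR x h
    have := (vecLe1_iff f x xs).mp h1 t (Set.mem_uIcc.mpr (Or.inr ⟨ht1.le, ht2.le⟩))
    nlinarith

lemma maximal_of (f : ℝ → ℝ) (xs : ℝ)
    (hL : ∀ x, x < xs → ∃ t, x < t ∧ t < xs ∧ 0 < f t)
    (hR : ∀ x, xs < x → ∃ t, xs < t ∧ t < x ∧ f t < 0) : vecMaximal1 f xs := by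
  rintro x ⟨h1, h2⟩
  rcases lt_trichotomy x xs with h | h | h
  · obtain ⟨t, ht1, ht2, ht3⟩ := hL x h
    have := (vecLe1_iff f xs x).mp h1 t (Set.mem_uIcc.mpr (Or.inr ⟨ht1.le, ht2.le⟩))
    nlinarith
  · exact h2 (h ▸ h1)
  · obtain ⟨t, ht1, ht2, ht3⟩ := hR x h
    have := (vecLe1_iff f xs x).mp h1 t (mem_uIcc_of_le ht1.le ht2.le)
    nlinarith

/-- locate a positive real between consecutive zeros -/
lemma loc (y : ℝ) (hy : 0 < y) :
    ∃ n : ℕ, 1/(((n:ℝ)+1)*π) < y ∧ (n:ℝ)*π*y ≤ 1 := by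
  have hπ := Real.pi_pos
  refine ⟨⌊1/(π*y)⌋₊, ?_, ?_⟩
  · have h := Nat.lt_floor_add_one (1/(π*y))
    rw [div_lt_iff₀ (by positivity)] at h ⊢
    nlinarith
  · have h := Nat.floor_le (le_of_lt (by positivity : (0:ℝ) < 1/(π*y)))
    rw [le_div_iff₀ (by positivity)] at h
    nlinarith


lemma ex_pos_between (k : ℕ) (x : ℝ) (hx : 1/((2*(k:ℝ)+1)*π) < x) :
    ∃ t, 1/((2*(k:ℝ)+1)*π) < t ∧ t < x ∧ 0 < g t := by
  have hπ := Real.pi_pos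
  set z := 1/((2*(k:ℝ)+1)*π) with hz
  set m := 1/((2*(k:ℝ)+2⁻¹)*π) with hm
  have hk0 : (0:ℝ) ≤ 2*(k:ℝ)*π := by positivity
  have hzm : z < m := by
    rw [hz, hm]
    apply one_div_lt_one_div_of_lt (by positivity)
    nlinarith
  have hmlt : 2*(k:ℝ)*π*m < 1 := by
    rw [hm, mul_one_div, div_lt_one (by positivity)]
    nlinarith
  refine ⟨min ((z + x)/2) m, lt_min (by linarith) hzm, ?_, ?_⟩
  · calc min ((z + x)/2) m ≤ (z + x)/2 := min_le_left _ _
    _ < x := by linarith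
  · apply gA k _ (lt_min (by linarith) hzm)
    calc 2*(k:ℝ)*π * min ((z + x)/2) m ≤ 2*(k:ℝ)*π * m :=
          mul_le_mul_of_nonneg_left (min_le_right _ _) hk0
    _ < 1 := hmlt

lemma ex_neg_between (k : ℕ) (x : ℝ) (hx : 1/((2*(k:ℝ)+2)*π) < x) :
    ∃ t, 1/((2*(k:ℝ)+2)*π) < t ∧ t < x ∧ g t < 0 := by
  have hπ := Real.pi_pos
  set z2 := 1/((2*(k:ℝ)+2)*π) with hz2
  set z1 := 1/((2*(k:ℝ)+1)*π) with hz1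
  have hzz : z2 < z1 := by
    rw [hz1, hz2]
    apply one_div_lt_one_div_of_lt (by positivity)
    nlinarith
  refine ⟨min ((z2 + x)/2) ((z2 + z1)/2), lt_min (by linarith) (by linarith), ?_, ?_⟩
  · calc min ((z2 + x)/2) ((z2 + z1)/2) ≤ (z2 + x)/2 := min_le_left _ _
    _ < x := by linarith
  · apply gB k _ (lt_min (by linarith) (by linarith))
    calc min ((z2 + x)/2) ((z2 + z1)/2) ≤ (z2 + z1)/2 := min_le_right _ _
    _ < z1 := by linarith

lemma ex_neg_left (k : ℕ) (x : ℝ) (hx : x < 1/((2*(k:ℝ)+1)*π)) :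
    ∃ t, x < t ∧ t < 1/((2*(k:ℝ)+1)*π) ∧ g t < 0 := by
  have hπ := Real.pi_pos
  set z2 := 1/((2*(k:ℝ)+2)*π) with hz2
  set z1 := 1/((2*(k:ℝ)+1)*π) with hz1
  have hzz : z2 < z1 := by
    rw [hz1, hz2]
    apply one_div_lt_one_div_of_lt (by positivity)
    nlinarith
  have hmax : max x z2 < z1 := max_lt hx hzz
  refine ⟨(max x z2 + z1)/2, ?_, by linarith, ?_⟩
  · have : x ≤ max x z2 := le_max_left _ _
    linarith
  · apply gB k _ ?_ (by linarith)
    have : z2 ≤ max x z2 := le_max_right _ _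
    linarith

lemma ex_pos_left (k : ℕ) (x : ℝ) (hx : x < 1/((2*(k:ℝ)+2)*π)) :
    ∃ t, x < t ∧ t < 1/((2*(k:ℝ)+2)*π) ∧ 0 < g t := by
  have hπ := Real.pi_pos
  set z3 := 1/((2*(k:ℝ)+3)*π) with hz3
  set z2 := 1/((2*(k:ℝ)+2)*π) with hz2
  have hzz : z3 < z2 := by
    rw [hz3, hz2]
    apply one_div_lt_one_div_of_lt (by positivity)
    nlinarith
  have hmax : max x z3 < z2 := max_lt hx hzz
  have ht1 : x < (max x z3 + z2)/2 := by
    have : x ≤ max x z3 := le_max_left _ _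
    linarith
  have ht2 : (max x z3 + z2)/2 < z2 := by linarith
  refine ⟨(max x z3 + z2)/2, ht1, ht2, ?_⟩
  have h3 : z3 < (max x z3 + z2)/2 := by
    have : z3 ≤ max x z3 := le_max_right _ _
    linarith
  apply gA (k+1) _ ?_ ?_
  · push_cast
    rw [show 2*((k:ℝ)+1)+1 = 2*(k:ℝ)+3 by ring]
    exact h3
  · push_cast
    rw [show 2*((k:ℝ)+1)*π = (2*(k:ℝ)+2)*π by ring]
    have h2pos : (0:ℝ) < (2*(k:ℝ)+2)*π := by positivity
    have hc : (2*(k:ℝ)+2)*π * z2 = 1 := by rw [hz2, mul_one_div, div_self (ne_of_gt h2pos)]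
    nlinarith [mul_lt_mul_of_pos_left ht2 h2pos]


lemma neg_form (c : ℝ) : 1/((-c)*π) = -(1/(c*π)) := by
  rw [neg_mul, one_div_neg_eq_neg_one_div]

lemma min_odd (k : ℕ) : vecMinimal1 g (1/((2*(k:ℝ)+1)*π)) := by
  apply minimal_of
  · intro x hx; exact ex_neg_left k x hx
  · intro x hx; exact ex_pos_between k x hx

lemma min_zero : vecMinimal1 g 0 := by
  have hπ := Real.pi_pos
  apply minimal_of
  · intro x hx
    obtain ⟨n, hn1, hn2⟩ := loc (-x) (by linarith)
    have key : 1/((2*(n:ℝ)+2)*π) < -x :=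
      lt_of_le_of_lt (one_div_le_one_div_of_le (by positivity) (by nlinarith)) hn1
    obtain ⟨t, h1, h2, h3⟩ := ex_neg_between n (-x) key
    have hzpos : 0 < 1/((2*(n:ℝ)+2)*π) := by positivity
    exact ⟨-t, by linarith, by linarith, by rw [g_even t]; exact h3⟩
  · intro x hx
    obtain ⟨n, hn1, hn2⟩ := loc x hx
    have key : 1/((2*(n:ℝ)+1)*π) < x :=
      lt_of_le_of_lt (one_div_le_one_div_of_le (by positivity) (by nlinarith)) hn1
    obtain ⟨t, h1, h2, h3⟩ := ex_pos_between n x key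
    have hzpos : 0 < 1/((2*(n:ℝ)+1)*π) := by positivity
    exact ⟨t, by linarith, h2, h3⟩

lemma min_negeven (k : ℕ) : vecMinimal1 g (1/((-(2*((k:ℝ)+1)))*π)) := by
  have hxs : (1:ℝ)/((-(2*((k:ℝ)+1)))*π) = -(1/((2*(k:ℝ)+2)*π)) := by
    rw [neg_form, show (2*((k:ℝ)+1)) = 2*(k:ℝ)+2 from by ring]
  rw [hxs]
  apply minimal_of
  · intro x hx
    obtain ⟨t, h1, h2, h3⟩ := ex_neg_between k (-x) (by linarith)
    exact ⟨-t, by linarith, by linarith, by rw [g_even t]; exact h3⟩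
  · intro x hx
    obtain ⟨t, h1, h2, h3⟩ := ex_pos_left k (-x) (by linarith)
    exact ⟨-t, by linarith, by linarith, by rw [g_even t]; exact h3⟩

lemma max_even (k : ℕ) : vecMaximal1 g (1/((2*((k:ℝ)+1))*π)) := by
  rw [show (2*((k:ℝ)+1)) = 2*(k:ℝ)+2 from by ring]
  apply maximal_of
  · intro x hx; exact ex_pos_left k x hx
  · intro x hx; exact ex_neg_between k x hx

lemma max_zero : vecMaximal1 g 0 := by
  have hπ := Real.pi_pos
  apply maximal_of
  · intro x hx
    obtain ⟨n, hn1, hn2⟩ := loc (-x) (by linarith)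
    have key : 1/((2*(n:ℝ)+1)*π) < -x :=
      lt_of_le_of_lt (one_div_le_one_div_of_le (by positivity) (by nlinarith)) hn1
    obtain ⟨t, h1, h2, h3⟩ := ex_pos_between n (-x) key
    have hzpos : 0 < 1/((2*(n:ℝ)+1)*π) := by positivity
    exact ⟨-t, by linarith, by linarith, by rw [g_even t]; exact h3⟩
  · intro x hx
    obtain ⟨n, hn1, hn2⟩ := loc x hx
    have key : 1/((2*(n:ℝ)+2)*π) < x :=
      lt_of_le_of_lt (one_div_le_one_div_of_le (by positivity) (by nlinarith)) hn1
    obtain ⟨t, h1, h2, h3⟩ := ex_neg_between n x key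
    have hzpos : 0 < 1/((2*(n:ℝ)+2)*π) := by positivity
    exact ⟨t, by linarith, h2, h3⟩

lemma max_negodd (k : ℕ) : vecMaximal1 g (1/((-(2*(k:ℝ)+1))*π)) := by
  have hxs : (1:ℝ)/((-(2*(k:ℝ)+1))*π) = -(1/((2*(k:ℝ)+1)*π)) := by
    rw [show (-(2*(k:ℝ)+1)) = -(2*(k:ℝ)+1) from rfl, neg_form]
  rw [hxs]
  apply maximal_of
  · intro x hx
    obtain ⟨t, h1, h2, h3⟩ := ex_pos_between k (-x) (by linarith)
    exact ⟨-t, by linarith, by linarith, by rw [g_even t]; exact h3⟩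
  · intro x hx
    obtain ⟨t, h1, h2, h3⟩ := ex_neg_left k (-x) (by linarith)
    exact ⟨-t, by linarith, by linarith, by rw [g_even t]; exact h3⟩


lemma delta_lt (B y : ℝ) (hB : 0 ≤ B) (h : B*y < 1) :
    B*(y + (1 - B*y)/(B+1)/2) < 1 := by
  have hB1 : 0 < B + 1 := by linarith
  set δ : ℝ := (1 - B*y)/(B+1) with hδdef
  have hδ : 0 < δ := div_pos (by linarith) hB1
  have hδe : δ*(B+1) = 1 - B*y := div_mul_cancel₀ _ (ne_of_gt hB1)
  have hBδ : 0 ≤ B*δ := mul_nonneg hB hδ.le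
  nlinarith

lemma not_min (x : ℝ)
    (h1 : ¬ ∃ k : ℕ, x = 1/((2*(k:ℝ)+1)*π))
    (h3 : ¬ ∃ k : ℕ, x = 1/((-(2*((k:ℝ)+1)))*π))
    (h2 : x ≠ 0) : ¬ vecMinimal1 g x := by
  have hπ := Real.pi_pos
  intro hmin
  rcases lt_trichotomy x 0 with hx | hx | hx
  · -- negative case
    obtain ⟨n, hn1, hn2⟩ := loc (-x) (by linarith)
    rcases Nat.even_or_odd n with ⟨k, hk⟩ | ⟨k, hk⟩
    · -- n = 2k even : x ∈ [-z(2k), -z(2k+1))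
      have hk' : (n:ℝ) = 2*(k:ℝ) := by rw [hk]; push_cast; ring
      rw [hk'] at hn1 hn2
      rw [show (2*(k:ℝ)+1) = 2*(k:ℝ)+1 from rfl] at hn1
      have hB : (0:ℝ) ≤ 2*(k:ℝ)*π := by positivity
      have hstrict : 2*(k:ℝ)*π*(-x) < 1 := by
        rcases lt_or_eq_of_le hn2 with h | h
        · exact h
        · exfalso
          rcases Nat.eq_zero_or_pos k with rfl | hkpos
          · norm_num at h
          · obtain ⟨k', rfl⟩ := Nat.exists_eq_add_of_le hkpos
            apply h3
            refine ⟨k', ?_⟩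
            have hc : 0 < (2*((k':ℝ)+1))*π := by positivity
            rw [neg_form, show (2*((k':ℝ)+1)) = 2*((k'+1 : ℕ):ℝ) from by push_cast; ring]
            have hy : -x = 1/(2*((k'+1:ℕ):ℝ)*π) := by
              rw [eq_div_iff (by positivity)]
              push_cast at h ⊢
              linarith
            push_cast at hy ⊢
            linarith [hy]
      set B := 2*(k:ℝ)*π with hBdef
      set x' : ℝ := -((-x) + (1 - B*(-x))/(B+1)/2) with hx'def
      have hδpos : 0 < (1 - B*(-x))/(B+1)/2 := by
        apply div_pos (div_pos (by linarith) (by linarith)) (by norm_num)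
      have hx'x : x' < x := by rw [hx'def]; linarith
      have hBx' : B*(-x') < 1 := by
        rw [hx'def, neg_neg]
        exact delta_lt B (-x) hB hstrict
      have hnx' : (-x) < -x' := by rw [hx'def, neg_neg]; linarith
      apply hmin x'
      apply lt_left_pos g x' x hx'x
      · intro t ht1 ht2
        have hgt := gA k (-t) (by linarith) ?_
        · rw [g_even t] at hgt; exact hgt.le
        · calc 2*(k:ℝ)*π*(-t) ≤ 2*(k:ℝ)*π*(-x') :=
              mul_le_mul_of_nonneg_left (by linarith) hB
          _ < 1 := hBx'
      · have hgt := gA k (-x') (by linarith) hBx'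
        rw [g_even x'] at hgt; exact hgt
    · -- n = 2k+1 odd : x ∈ [-z(2k+1), -z(2k+2))
      have hk' : (n:ℝ) = 2*(k:ℝ)+1 := by rw [hk]; push_cast; ring
      rw [hk'] at hn1 hn2
      rw [show (2*(k:ℝ)+1+1) = 2*(k:ℝ)+2 from by ring] at hn1
      have hyz : -x ≤ 1/((2*(k:ℝ)+1)*π) := by
        rw [le_div_iff₀ (by positivity)]; linarith
      set x' : ℝ := (x + -(1/((2*(k:ℝ)+2)*π)))/2 with hx'def
      have hxx' : x < x' := by rw [hx'def]; linarith
      have hx'z : x' < -(1/((2*(k:ℝ)+2)*π)) := by rw [hx'def]; linarith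
      apply hmin x'
      apply lt_right_neg g x' x hxx'
      · intro t ht1 ht2
        have hgt := gB' k (-t) (by linarith) (by linarith)
        rw [g_even t] at hgt; exact hgt
      · have hgt := gB k (-x') (by linarith) (by linarith)
        rw [g_even x'] at hgt; exact hgt
  · exact h2 hx
  · -- positive case
    obtain ⟨n, hn1, hn2⟩ := loc x hx
    rcases Nat.even_or_odd n with ⟨k, hk⟩ | ⟨k, hk⟩
    · -- n = 2k even : x ∈ (z(2k+1), z(2k)]
      have hk' : (n:ℝ) = 2*(k:ℝ) := by rw [hk]; push_cast; ring
      rw [hk'] at hn1 hn2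
      set x' : ℝ := (1/((2*(k:ℝ)+1)*π) + x)/2 with hx'def
      have hz : 1/((2*(k:ℝ)+1)*π) < x' := by rw [hx'def]; linarith
      have hx'x : x' < x := by rw [hx'def]; linarith
      have h2k : (0:ℝ) ≤ 2*(k:ℝ)*π := by positivity
      apply hmin x'
      apply lt_left_pos g x' x hx'x
      · intro t ht1 ht2
        apply gA' k t (by linarith)
        calc 2*(k:ℝ)*π*t ≤ 2*(k:ℝ)*π*x := mul_le_mul_of_nonneg_left ht2 h2k
        _ ≤ 1 := hn2
      · apply gA k x' hz
        rcases Nat.eq_zero_or_pos k with rfl | hkpos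
        · norm_num
        · have hkR : (0:ℝ) < 2*(k:ℝ)*π := by
            have : (1:ℝ) ≤ (k:ℝ) := by exact_mod_cast hkpos
            nlinarith
          calc 2*(k:ℝ)*π*x' < 2*(k:ℝ)*π*x := by nlinarith
          _ ≤ 1 := hn2
    · -- n = 2k+1 odd : x ∈ (z(2k+2), z(2k+1)]
      have hk' : (n:ℝ) = 2*(k:ℝ)+1 := by rw [hk]; push_cast; ring
      rw [hk'] at hn1 hn2
      rw [show (2*(k:ℝ)+1+1) = 2*(k:ℝ)+2 from by ring] at hn1
      have hle : x ≤ 1/((2*(k:ℝ)+1)*π) := by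
        rw [le_div_iff₀ (by positivity)]; linarith
      have hltz : x < 1/((2*(k:ℝ)+1)*π) :=
        lt_of_le_of_ne hle (fun hc => h1 ⟨k, hc⟩)
      set x' : ℝ := (x + 1/((2*(k:ℝ)+1)*π))/2 with hx'def
      have hxx' : x < x' := by rw [hx'def]; linarith
      have hx'z : x' < 1/((2*(k:ℝ)+1)*π) := by rw [hx'def]; linarith
      apply hmin x'
      apply lt_right_neg g x' x hxx'
      · intro t ht1 ht2
        exact (gB k t (by linarith) (by linarith)).le
      · exact gB k x' (by linarith) hx'z


lemma not_max (x : ℝ)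
    (h1 : ¬ ∃ k : ℕ, x = 1/((2*((k:ℝ)+1))*π))
    (h3 : ¬ ∃ k : ℕ, x = 1/((-(2*(k:ℝ)+1))*π))
    (h2 : x ≠ 0) : ¬ vecMaximal1 g x := by
  have hπ := Real.pi_pos
  intro hmax
  rcases lt_trichotomy x 0 with hx | hx | hx
  · -- negative case
    obtain ⟨n, hn1, hn2⟩ := loc (-x) (by linarith)
    rcases Nat.even_or_odd n with ⟨k, hk⟩ | ⟨k, hk⟩
    · -- n = 2k even : x ∈ [-z(2k), -z(2k+1)) ; go right
      have hk' : (n:ℝ) = 2*(k:ℝ) := by rw [hk]; push_cast; ring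
      rw [hk'] at hn1 hn2
      have h2k : (0:ℝ) ≤ 2*(k:ℝ)*π := by positivity
      set x' : ℝ := (x + -(1/((2*(k:ℝ)+1)*π)))/2 with hx'def
      have hxx' : x < x' := by rw [hx'def]; linarith
      have hx'z : x' < -(1/((2*(k:ℝ)+1)*π)) := by rw [hx'def]; linarith
      apply hmax x'
      apply lt_right_pos g x x' hxx'
      · intro t ht1 ht2
        have hgt := gA' k (-t) (by linarith) ?_
        · rw [g_even t] at hgt; exact hgt
        · calc 2*(k:ℝ)*π*(-t) ≤ 2*(k:ℝ)*π*(-x) :=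
              mul_le_mul_of_nonneg_left (by linarith) h2k
          _ ≤ 1 := hn2
      · have hgt := gA k (-x') (by linarith) ?_
        · rw [g_even x'] at hgt; exact hgt
        · rcases Nat.eq_zero_or_pos k with rfl | hkpos
          · norm_num
          · have hkR : (0:ℝ) < 2*(k:ℝ)*π := by
              have : (1:ℝ) ≤ (k:ℝ) := by exact_mod_cast hkpos
              nlinarith
            calc 2*(k:ℝ)*π*(-x') < 2*(k:ℝ)*π*(-x) := by nlinarith
            _ ≤ 1 := hn2
    · -- n = 2k+1 odd : x ∈ [-z(2k+1), -z(2k+2)) ; go left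
      have hk' : (n:ℝ) = 2*(k:ℝ)+1 := by rw [hk]; push_cast; ring
      rw [hk'] at hn1 hn2
      rw [show (2*(k:ℝ)+1+1) = 2*(k:ℝ)+2 from by ring] at hn1
      have hyz : -x ≤ 1/((2*(k:ℝ)+1)*π) := by
        rw [le_div_iff₀ (by positivity)]; linarith
      have hystrict : -x < 1/((2*(k:ℝ)+1)*π) := by
        rcases lt_or_eq_of_le hyz with h | h
        · exact h
        · exfalso
          apply h3
          refine ⟨k, ?_⟩
          rw [show (-(2*(k:ℝ)+1)) = -(2*(k:ℝ)+1) from rfl, neg_form]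
          linarith
      set x' : ℝ := -((-x + 1/((2*(k:ℝ)+1)*π))/2) with hx'def
      clear_value x'
      have hx'x : x' < x := by rw [hx'def]; linarith
      have hnx' : -x < -x' := by rw [hx'def]; linarith
      have hnx'z : -x' < 1/((2*(k:ℝ)+1)*π) := by rw [hx'def]; linarith
      apply hmax x'
      apply lt_left_neg g x x' hx'x
      · intro t ht1 ht2
        have hgt := gB k (-t) (by linarith) (by linarith)
        rw [g_even t] at hgt; exact hgt.le
      · have hgt := gB k (-x') (by linarith) hnx'z
        rw [g_even x'] at hgt; exact hgt
  · exact h2 hx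
  · -- positive case
    obtain ⟨n, hn1, hn2⟩ := loc x hx
    rcases Nat.even_or_odd n with ⟨k, hk⟩ | ⟨k, hk⟩
    · -- n = 2k even : x ∈ (z(2k+1), z(2k)] ; go right
      have hk' : (n:ℝ) = 2*(k:ℝ) := by rw [hk]; push_cast; ring
      rw [hk'] at hn1 hn2
      have hB : (0:ℝ) ≤ 2*(k:ℝ)*π := by positivity
      have hstrict : 2*(k:ℝ)*π*x < 1 := by
        rcases lt_or_eq_of_le hn2 with h | h
        · exact h
        · exfalso
          rcases Nat.eq_zero_or_pos k with rfl | hkpos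
          · norm_num at h
          · obtain ⟨k', rfl⟩ := Nat.exists_eq_add_of_le hkpos
            apply h1
            refine ⟨k', ?_⟩
            rw [eq_div_iff (by positivity)]
            push_cast at h ⊢
            linarith
      set B := 2*(k:ℝ)*π with hBdef
      set x' : ℝ := x + (1 - B*x)/(B+1)/2 with hx'def
      have hδpos : 0 < (1 - B*x)/(B+1)/2 := by
        apply div_pos (div_pos (by linarith) (by linarith)) (by norm_num)
      have hxx' : x < x' := by rw [hx'def]; linarith
      have hBx' : B*x' < 1 := by
        rw [hx'def]
        exact delta_lt B x hB hstrict
      apply hmax x'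
      apply lt_right_pos g x x' hxx'
      · intro t ht1 ht2
        apply (gA k t (by linarith) ?_).le
        calc 2*(k:ℝ)*π*t ≤ 2*(k:ℝ)*π*x' := mul_le_mul_of_nonneg_left ht2 hB
        _ < 1 := hBx'
      · exact gA k x' (by linarith) hBx'
    · -- n = 2k+1 odd : x ∈ (z(2k+2), z(2k+1)] ; go left
      have hk' : (n:ℝ) = 2*(k:ℝ)+1 := by rw [hk]; push_cast; ring
      rw [hk'] at hn1 hn2
      rw [show (2*(k:ℝ)+1+1) = 2*(k:ℝ)+2 from by ring] at hn1
      have hle : x ≤ 1/((2*(k:ℝ)+1)*π) := by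
        rw [le_div_iff₀ (by positivity)]; linarith
      set x' : ℝ := (1/((2*(k:ℝ)+2)*π) + x)/2 with hx'def
      have hx'x : x' < x := by rw [hx'def]; linarith
      have hzx' : 1/((2*(k:ℝ)+2)*π) < x' := by rw [hx'def]; linarith
      apply hmax x'
      apply lt_left_neg g x x' hx'x
      · intro t ht1 ht2
        exact gB' k t (by linarith) (by linarith)
      · exact gB k x' hzx' (by linarith)

end XsinAux

/-- The minimal and maximal elements of the one-dimensional vector field
`f(x) = x·sin(1/x)` for `x ≠ 0`, `f(0) = 0`:
minimal elements are `1/(nπ)` for `n = 1, 3, 5, …`, `0`, and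
`1/(nπ)` for `n = -2, -4, -6, …`; maximal elements are `1/(nπ)` for
`n = 2, 4, 6, …`, `0`, and `1/(nπ)` for `n = -1, -3, -5, …`. -/
theorem xsin_inv_minimal_maximal_sets
    (f : ℝ → ℝ) (hf : ∀ x : ℝ, x ≠ 0 → f x = x * Real.sin (1 / x)) (hf0 : f 0 = 0) :
    ({xs : ℝ | vecMinimal1 f xs} =
      {x : ℝ | ∃ k : ℕ, x = 1 / ((2 * (k : ℝ) + 1) * Real.pi)} ∪ {0} ∪
      {x : ℝ | ∃ k : ℕ, x = 1 / ((-(2 * ((k : ℝ) + 1))) * Real.pi)}) ∧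
    ({xs : ℝ | vecMaximal1 f xs} =
      {x : ℝ | ∃ k : ℕ, x = 1 / ((2 * ((k : ℝ) + 1)) * Real.pi)} ∪ {0} ∪
      {x : ℝ | ∃ k : ℕ, x = 1 / ((-(2 * (k : ℝ) + 1)) * Real.pi)}) := by
  have hfg : f = XsinAux.g := by
    funext t
    rcases eq_or_ne t 0 with rfl | h
    · simp [XsinAux.g, hf0]
    · rw [hf t h]; rfl
  subst hfg
  constructor
  · ext x
    simp only [Set.mem_union, Set.mem_setOf_eq, Set.mem_singleton_iff]
    constructor
    · intro h
      by_contra hc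
      exact XsinAux.not_min x (fun he => hc (Or.inl (Or.inl he)))
        (fun he => hc (Or.inr he)) (fun he => hc (Or.inl (Or.inr he))) h
    · rintro ((⟨k, rfl⟩ | rfl) | ⟨k, rfl⟩)
      · exact XsinAux.min_odd k
      · exact XsinAux.min_zero
      · exact XsinAux.min_negeven k
  · ext x
    simp only [Set.mem_union, Set.mem_setOf_eq, Set.mem_singleton_iff]
    constructor
    · intro h
      by_contra hc
      exact XsinAux.not_max x (fun he => hc (Or.inl (Or.inl he)))
        (fun he => hc (Or.inr he)) (fun he => hc (Or.inl (Or.inr he))) h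
    · rintro ((⟨k, rfl⟩ | rfl) | ⟨k, rfl⟩)
      · exact XsinAux.max_even k
      · exact XsinAux.max_zero
      · exact XsinAux.max_negodd k
end
end
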